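/- Let A be a unital separable C*-algebra and let α be an approximately inner automorphism of A. Suppose (p_j)_{j∈ℕ} is a central sequence of projections in A. Then there exists a central sequence (w_j)_{j∈ℕ} of partial isometries in A such that w_j* w_j = p_j and w_j w_j* = α(p_j) for every j. -/

import Mathlib

open Filter Topology

/-- A projection in a C*-algebra: a self-adjoint idempotent. -/
def IsProjection {A : Type*} [Mul A] [Star A] (p : A) : Prop :=
  IsSelfAdjoint p ∧ IsIdempotentElem p

/-- A positive element of a C*-algebra (one of the standard equivalent definitions). -/
def IsPos {A : Type*} [Mul A] [Star A] (a : A) : Prop :=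
  ∃ b : A, a = star b * b

/-- A central sequence: asymptotically commutes with every element. -/
def IsCentralSeq {A : Type*} [CStarAlgebra A] (x : ℕ → A) : Prop :=
  ∀ a : A, Tendsto (fun n => ‖x n * a - a * x n‖) atTop (nhds 0)

/-- An approximately inner map: on every finite set it is approximated by `a ↦ v* a v`
for unitaries `v`. -/
def ApproxInner {A : Type*} [CStarAlgebra A] (f : A → A) : Prop :=
  ∀ (F : Finset A) (ε : ℝ), 0 < ε →
    ∃ v : A, v ∈ unitary A ∧ ∀ a ∈ F, ‖f a - star v * a * v‖ < ε

/-- Murray–von Neumann equivalence of projections. -/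
def MvNEquiv {A : Type*} [CStarAlgebra A] (p q : A) : Prop :=
  ∃ w : A, star w * w = p ∧ w * star w = q

/-- `[a] ≤ [b]`: there is `x` with `a = x*x` and `xx*` in the closure of `bAb`. -/
def CuntzLE {A : Type*} [CStarAlgebra A] (a b : A) : Prop :=
  ∃ x : A, a = star x * x ∧ x * star x ∈ closure (Set.range fun c => b * c * b)

/-- A simple C*-algebra: the only closed two-sided ideals are trivial. -/
def IsSimpleCStar (A : Type*) [CStarAlgebra A] : Prop :=
  ∀ I : TwoSidedIdeal A, IsClosed (I : Set A) →
    (I : Set A) = {0} ∨ (I : Set A) = Set.univ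

/-- A tracial state on a unital C*-algebra. -/
def IsTracialState {A : Type*} [CStarAlgebra A] (τ : A →ₗ[ℂ] ℂ) : Prop :=
  (∀ a : A, ∃ r : ℝ, 0 ≤ r ∧ τ (star a * a) = (r : ℂ)) ∧
  τ 1 = 1 ∧ ∀ a b : A, τ (a * b) = τ (b * a)

/-- The SP-property: every hereditary subalgebra `\overline{aAa}` (`a` positive nonzero)
contains a nonzero projection. -/
def SPProperty (A : Type*) [CStarAlgebra A] : Prop :=
  ∀ a : A, IsPos a → a ≠ 0 →
    ∃ p : A, IsProjection p ∧ p ≠ 0 ∧ p ∈ closure (Set.range fun c => a * c * a)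

/-- Stable rank one: invertibles are dense. -/
def StableRankOne (A : Type*) [CStarAlgebra A] : Prop :=
  Dense {x : A | IsUnit x}

/-- The Fundamental Comparison Property. -/
def FundamentalComparison (A : Type*) [CStarAlgebra A] : Prop :=
  ∀ p q : A, IsProjection p → IsProjection q →
    (∀ τ : A →ₗ[ℂ] ℂ, IsTracialState τ → (τ p).re < (τ q).re) →
    ∃ q' : A, IsProjection q' ∧ q' * q = q' ∧ q * q' = q' ∧ MvNEquiv p q'

/-- Tracial (topological) rank zero for a simple unital C*-algebra. -/
def TracialRankZero (A : Type*) [CStarAlgebra A] : Prop :=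
  ∀ (F : Finset A) (ε : ℝ), 0 < ε → ∀ a : A, IsPos a → a ≠ 0 →
    ∃ (B : NonUnitalStarSubalgebra ℂ A) (p : A),
      FiniteDimensional ℂ B ∧ IsProjection p ∧ p ∈ B ∧
      (∀ b ∈ B, p * b = b ∧ b * p = b) ∧
      (∀ x ∈ F, ‖x * p - p * x‖ < ε) ∧
      (∀ x ∈ F, ∃ b ∈ B, ‖p * x * p - b‖ < ε) ∧
      CuntzLE (1 - p) a

/-- The tracial Rokhlin property for an automorphism. -/
def TracialRokhlin {A : Type*} [CStarAlgebra A] (α : A ≃⋆ₐ[ℂ] A) : Prop :=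
  ∀ (F : Finset A) (ε : ℝ), 0 < ε → ∀ n : ℕ, ∀ x : A, IsPos x → x ≠ 0 →
    ∃ e : Fin (n + 1) → A,
      (∀ j, IsProjection (e j)) ∧
      (∀ i j, i ≠ j → e i * e j = 0) ∧
      (∀ j : Fin (n + 1), (j : ℕ) < n → ‖α (e j) - e (j + 1)‖ < ε) ∧
      (∀ j, ∀ a ∈ F, ‖e j * a - a * e j‖ < ε) ∧
      CuntzLE (1 - ∑ j, e j) x

/-- The tracial cyclic Rokhlin property for an automorphism: as the tracial
Rokhlin property, but with the cyclic condition `‖α(e n) - e 0‖ < ε` included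
(in `Fin (n+1)`, `j + 1` wraps around, so `e (n + 1) = e 0`). -/
def TracialCyclicRokhlin {A : Type*} [CStarAlgebra A] (α : A ≃⋆ₐ[ℂ] A) : Prop :=
  ∀ (F : Finset A) (ε : ℝ), 0 < ε → ∀ n : ℕ, ∀ x : A, IsPos x → x ≠ 0 →
    ∃ e : Fin (n + 1) → A,
      (∀ j, IsProjection (e j)) ∧
      (∀ i j, i ≠ j → e i * e j = 0) ∧
      (∀ j : Fin (n + 1), ‖α (e j) - e (j + 1)‖ < ε) ∧
      (∀ j, ∀ a ∈ F, ‖e j * a - a * e j‖ < ε) ∧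
      CuntzLE (1 - ∑ j, e j) x

/-- Integer powers of an automorphism, as a function. -/
def autZPow {A : Type*} [CStarAlgebra A] (α : A ≃⋆ₐ[ℂ] A) (m : ℤ) : A → A :=
  if 0 ≤ m then (⇑α)^[m.toNat] else (⇑α.symm)^[(-m).toNat]

/-- A uniformly outer map. -/
def UniformlyOuter {A : Type*} [CStarAlgebra A] (f : A → A) : Prop :=
  ∀ (a p : A), IsProjection p → ∀ ε : ℝ, 0 < ε →
    ∃ (n : ℕ) (q : Fin n → A),
      (∀ i, IsProjection (q i)) ∧ (∑ i, q i) = p ∧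
      ∀ i, ‖q i * a * f (q i)‖ < ε

section Stmt0Aux

lemma real_sqrt_inv_bounds {t : ℝ} (h : 3/8 ≤ t) :
    (Real.sqrt t)⁻¹ ≤ 2 ∧ |(Real.sqrt t)⁻¹ - 1| ≤ 2 * |t - 1| := by
  have ht0 : (0:ℝ) ≤ t := by linarith
  have hs : (1:ℝ)/2 ≤ Real.sqrt t := by
    have h1 : Real.sqrt (1/4) ≤ Real.sqrt t := Real.sqrt_le_sqrt (by linarith)
    have h2 : Real.sqrt (1/4) = 1/2 := by
      rw [show (1:ℝ)/4 = (1/2)^2 by norm_num, Real.sqrt_sq (by norm_num)]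
    linarith
  have hs0 : 0 < Real.sqrt t := by linarith
  have hsq : Real.sqrt t * Real.sqrt t = t := Real.mul_self_sqrt ht0
  constructor
  · have := inv_anti₀ (show (0:ℝ) < 1/2 by norm_num) hs
    simpa using this.trans (by norm_num)
  · have key : |1 - Real.sqrt t| ≤ |t - 1| := by
      rcases le_total (Real.sqrt t) 1 with h1 | h1
      · have : t ≤ Real.sqrt t := by nlinarith
        rw [abs_of_nonneg (by linarith), abs_of_nonpos (by nlinarith)]
        nlinarith
      · have : Real.sqrt t ≤ t := by nlinarith
        rw [abs_of_nonpos (by linarith), abs_of_nonneg (by nlinarith)]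
        nlinarith
    have e : (Real.sqrt t)⁻¹ - 1 = (1 - Real.sqrt t) / Real.sqrt t := by
      field_simp
    rw [e, abs_div, abs_of_nonneg hs0.le, div_le_iff₀ hs0]
    nlinarith [abs_nonneg (1 - Real.sqrt t), abs_nonneg (t-1)]

variable {A : Type*} [CStarAlgebra A]


lemma my_commute_cfc {x b : A} (hb : IsSelfAdjoint b) (hxb : x * b = b * x)
    (f : ℝ → ℝ) : x * cfc f b = cfc f b * x := by
  refine cfc_cases (fun y => x * y = y * x) b f (by simp) fun hf _ => ?_
  suffices H : ∀ g : C(spectrum ℝ b, ℝ), x * cfcHom hb g = cfcHom hb g * x from H _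
  intro g
  have hcont : Continuous (fun g : C(spectrum ℝ b, ℝ) => cfcHom hb (p := IsSelfAdjoint) g) :=
    (cfcHom_isClosedEmbedding hb).continuous
  have hcl : IsClosed {g : C(spectrum ℝ b, ℝ) | x * cfcHom hb g = cfcHom hb g * x} :=
    isClosed_eq (by continuity) (by continuity)
  have hpoly : ∀ g ∈ Set.range (Polynomial.toContinuousMapOnAlgHom (spectrum ℝ b)),
      x * cfcHom hb g = cfcHom hb g * x := by
    rintro - ⟨q, rfl⟩
    have h1 : (Polynomial.toContinuousMapOnAlgHom (spectrum ℝ b) q) =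
        ContinuousMap.mk ((spectrum ℝ b).restrict q.eval)
          (Continuous.continuousOn q.toContinuousMap.continuous).restrict := by
      ext t; rfl
    have h2 : cfcHom hb (ContinuousMap.mk ((spectrum ℝ b).restrict q.eval)
          (Continuous.continuousOn q.toContinuousMap.continuous).restrict) = cfc q.eval b := by
      rw [cfc_apply q.eval b hb]
      rfl
    rw [h1, h2, cfc_polynomial q b hb]
    exact (Algebra.commute_of_mem_adjoin_singleton_of_commute
      (Polynomial.aeval_mem_adjoin_singleton ℝ b) (show Commute x b from hxb)).eq
  have hmem : g ∈ closure (Set.range (Polynomial.toContinuousMapOnAlgHom (spectrum ℝ b))) := by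
    rw [← polynomialFunctions_coe, ← Subalgebra.topologicalClosure_coe,
      polynomialFunctions.topologicalClosure]
    trivial
  exact closure_minimal hpoly hcl hmem

lemma proj_norm_le_one {q : A} (h1 : star q = q) (h2 : q * q = q) : ‖q‖ ≤ 1 := by
  have h := CStarRing.norm_star_mul_self (x := q)
  rw [h1, h2] at h
  nlinarith [norm_nonneg q]

lemma exists_unitary_intertwiner [Nontrivial A] {q q' : A}
    (hq1 : star q = q) (hq2 : q * q = q) (hq'1 : star q' = q') (hq'2 : q' * q' = q')
    (hd : ‖q - q'‖ < 1/8) :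
    ∃ z : A, z ∈ unitary A ∧ z * q' = q * z ∧ ‖z - 1‖ ≤ 50 * ‖q - q'‖ := by
  set δ := ‖q - q'‖ with hδ
  have hδ0 : 0 ≤ δ := norm_nonneg _
  have hqn : ‖q‖ ≤ 1 := proj_norm_le_one hq1 hq2
  have hq'n : ‖q'‖ ≤ 1 := proj_norm_le_one hq'1 hq'2
  have hq2' : ∀ x : A, q * (q * x) = q * x := fun x => by rw [← mul_assoc, hq2]
  have hq'2' : ∀ x : A, q' * (q' * x) = q' * x := fun x => by rw [← mul_assoc, hq'2]
  set c := q * q' + (1 - q) * (1 - q') with hc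
  have hstarc : star c = q' * q + (1 - q') * (1 - q) := by
    rw [hc]
    simp [star_add, star_mul, star_sub, star_one, hq1, hq'1]
  have hc1 : ‖c - 1‖ ≤ 2 * δ := by
    have e : c - 1 = q * (q' - q) + (q - q') * q' := by
      rw [hc]
      simp only [mul_sub, sub_mul, mul_add, add_mul, one_mul, mul_one, mul_assoc,
        hq2, hq'2, hq2', hq'2']
      abel
    rw [e]
    calc ‖q * (q' - q) + (q - q') * q'‖ ≤ ‖q * (q' - q)‖ + ‖(q - q') * q'‖ := norm_add_le _ _
      _ ≤ ‖q‖ * ‖q' - q‖ + ‖q - q'‖ * ‖q'‖ := add_le_add (norm_mul_le _ _) (norm_mul_le _ _)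
      _ ≤ 1 * δ + δ * 1 := by
          rw [norm_sub_rev q' q]
          exact add_le_add (mul_le_mul_of_nonneg_right hqn hδ0)
            (mul_le_mul_of_nonneg_left hq'n hδ0)
      _ = 2 * δ := by ring
  have hcn : ‖c‖ ≤ 1 + 2 * δ := by
    have e : c = (c - 1) + 1 := by abel
    calc ‖c‖ = ‖(c - 1) + 1‖ := by rw [← e]
      _ ≤ ‖c - 1‖ + ‖(1:A)‖ := norm_add_le _ _
      _ ≤ 2 * δ + 1 := by rw [norm_one]; linarith
      _ = 1 + 2 * δ := by ring
  have hsc1 : ‖star c - 1‖ ≤ 2 * δ := by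
    rw [show star c - 1 = star (c - 1) by simp [star_sub]]
    rwa [norm_star]
  have hscn : ‖star c‖ ≤ 1 + 2 * δ := by rwa [norm_star]
  set b := star c * c with hb
  have hbsa : IsSelfAdjoint b := IsSelfAdjoint.star_mul_self c
  have key5 : ∀ x y : A, ‖x - 1‖ ≤ 2*δ → ‖y - 1‖ ≤ 2*δ → ‖x‖ ≤ 1 + 2*δ → ‖x * y - 1‖ ≤ 5 * δ := by
    intro x y hx hy hxn
    have e : x * y - 1 = x * (y - 1) + (x - 1) := by noncomm_ring
    calc ‖x * y - 1‖ = ‖x * (y - 1) + (x - 1)‖ := by rw [e]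
      _ ≤ ‖x * (y - 1)‖ + ‖x - 1‖ := norm_add_le _ _
      _ ≤ ‖x‖ * ‖y - 1‖ + ‖x - 1‖ := by gcongr; exact norm_mul_le _ _
      _ ≤ (1 + 2*δ) * (2*δ) + 2*δ := by
          refine add_le_add (mul_le_mul hxn hy (norm_nonneg _) (by linarith)) hx
      _ ≤ 5 * δ := by nlinarith
  have hb1 : ‖b - 1‖ ≤ 5 * δ := key5 _ _ hsc1 hc1 hscn
  have hb1' : ‖b - 1‖ < 5/8 := lt_of_le_of_lt hb1 (by linarith)
  have hspec : ∀ t ∈ spectrum ℝ b, |t - 1| ≤ ‖b - 1‖ := by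
    intro t ht
    have h1 : t - 1 ∈ spectrum ℝ (b - algebraMap ℝ A 1) := by
      rw [← spectrum.sub_singleton_eq]
      exact Set.sub_mem_sub ht rfl
    have h2 := spectrum.norm_le_norm_of_mem h1
    simpa [Real.norm_eq_abs, map_one] using h2
  have hspec' : ∀ t ∈ spectrum ℝ b, 3/8 ≤ t := by
    intro t ht
    have h1 := (abs_le.1 (hspec t ht)).1
    linarith [hb1'.le]
  set g : ℝ → ℝ := fun t => (Real.sqrt t)⁻¹ with hgdef
  have hg : ContinuousOn g (spectrum ℝ b) := by
    apply ContinuousOn.inv₀ Real.continuous_sqrt.continuousOn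
    intro t ht
    exact (Real.sqrt_pos.2 (by linarith [hspec' t ht])).ne'
  set s := cfc g b with hs
  have hssa : IsSelfAdjoint s := cfc_predicate g b
  have hcomm : ∀ x : A, x * b = b * x → x * s = s * x := fun x hx => my_commute_cfc hbsa hx g
  have hssb : s * s * b = 1 := by
    have e1 : cfc (fun t => (g t * g t) * t) b
        = cfc (fun t => g t * g t) b * cfc (fun t : ℝ => t) b :=
      cfc_mul _ _ b (hg.mul hg) continuous_id.continuousOn
    have e2 : cfc (fun t => g t * g t) b = s * s := cfc_mul g g b hg hg
    have e3 : cfc (fun t : ℝ => t) b = b := cfc_id' ℝ b hbsa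
    rw [e2, e3] at e1
    have e4 : cfc (fun t => (g t * g t) * t) b = 1 := by
      rw [show (1:A) = cfc (fun _ : ℝ => (1:ℝ)) b from (cfc_const_one ℝ b hbsa).symm]
      apply cfc_congr
      intro t ht
      have h38 := hspec' t ht
      have h0 : (0:ℝ) < t := by linarith
      have hsq : Real.sqrt t * Real.sqrt t = t := Real.mul_self_sqrt h0.le
      show (Real.sqrt t)⁻¹ * (Real.sqrt t)⁻¹ * t = 1
      rw [← mul_inv, hsq]
      exact inv_mul_cancel₀ h0.ne'
    rw [← e1, e4]
  have hcq' : c * q' = q * q' := by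
    rw [hc]
    simp only [mul_sub, sub_mul, mul_add, add_mul, one_mul, mul_one, mul_assoc,
      hq2, hq'2, hq2', hq'2']
    abel
  have hqc : q * c = q * q' := by
    rw [hc]
    simp only [mul_sub, sub_mul, mul_add, add_mul, one_mul, mul_one, mul_assoc,
      hq2, hq'2, hq2', hq'2']
    abel
  have hq'b : q' * b = b * q' := by
    rw [hb, hstarc, hc]
    simp only [mul_sub, sub_mul, mul_add, add_mul, one_mul, mul_one, mul_assoc,
      hq2, hq'2, hq2', hq'2']
    abel
  set z := c * s with hz
  have hq'com : q' * s = s * q' := hcomm q' hq'b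
  have hbscom : b * s = s * b := hcomm b rfl
  have hzq : z * q' = q * z := by
    calc z * q' = c * (s * q') := by rw [hz, mul_assoc]
      _ = c * (q' * s) := by rw [← hq'com]
      _ = (c * q') * s := by rw [mul_assoc]
      _ = (q * q') * s := by rw [hcq']
      _ = (q * c) * s := by rw [← hqc]
      _ = q * z := by rw [hz, mul_assoc]
  have hz1 : star z * z = 1 := by
    have e : star z = s * star c := by rw [hz, star_mul, hssa.star_eq]
    calc star z * z = (s * star c) * (c * s) := by rw [e, hz]
      _ = s * ((star c * c) * s) := by simp only [mul_assoc]
      _ = s * (b * s) := by rw [← hb]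
      _ = s * (s * b) := by rw [hbscom]
      _ = s * s * b := by rw [mul_assoc]
      _ = 1 := hssb
  have hccsunit : IsUnit (c * star c) := by
    have h1 : ‖c * star c - 1‖ ≤ 5 * δ := key5 _ _ hc1 hsc1 hcn
    have h2 : ‖1 - c * star c‖ < 1 := by
      rw [norm_sub_rev]; exact lt_of_le_of_lt h1 (by linarith)
    exact sub_sub_self 1 (c * star c) ▸ (Units.oneSub (1 - c * star c) h2).isUnit
  have hz2 : z * star z = 1 := by
    have e : star z = s * star c := by rw [hz, star_mul, hssa.star_eq]
    have hX : (z * star z) * (c * star c) = 1 * (c * star c) := by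
      calc (z * star z) * (c * star c) = (c * (s * s)) * ((star c * c) * star c) := by
            rw [hz, e]; simp only [mul_assoc]
        _ = (c * (s * s)) * (b * star c) := by rw [← hb]
        _ = c * (((s * s) * b) * star c) := by simp only [mul_assoc]
        _ = c * (1 * star c) := by rw [hssb]
        _ = 1 * (c * star c) := by rw [one_mul, one_mul]
    exact hccsunit.mul_right_cancel hX
  have hsn : ‖s‖ ≤ 2 := by
    rw [hs]
    refine norm_cfc_le (by norm_num) fun t ht => ?_
    rw [Real.norm_eq_abs, abs_of_nonneg (inv_nonneg.2 (Real.sqrt_nonneg t))]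
    exact (real_sqrt_inv_bounds (hspec' t ht)).1
  have hs1 : ‖s - 1‖ ≤ 10 * δ := by
    have e : cfc (fun t => g t - 1) b = s - 1 := by
      rw [cfc_sub g (fun _ => (1:ℝ)) b hg continuousOn_const, cfc_const_one ℝ b hbsa]
    rw [← e]
    refine norm_cfc_le (by linarith) fun t ht => ?_
    rw [Real.norm_eq_abs]
    calc |g t - 1| ≤ 2 * |t - 1| := (real_sqrt_inv_bounds (hspec' t ht)).2
      _ ≤ 2 * ‖b - 1‖ := by linarith [hspec t ht]
      _ ≤ 10 * δ := by linarith
  have hzn : ‖z - 1‖ ≤ 50 * δ := by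
    have e : z - 1 = (c - 1) * s + (s - 1) := by rw [hz]; noncomm_ring
    calc ‖z - 1‖ = ‖(c - 1) * s + (s - 1)‖ := by rw [e]
      _ ≤ ‖(c - 1) * s‖ + ‖s - 1‖ := norm_add_le _ _
      _ ≤ ‖c - 1‖ * ‖s‖ + ‖s - 1‖ := by gcongr; exact norm_mul_le _ _
      _ ≤ (2*δ) * 2 + 10 * δ := by
          refine add_le_add (mul_le_mul hc1 hsn (norm_nonneg _) (by linarith)) hs1
      _ ≤ 50 * δ := by nlinarith
  exact ⟨z, Unitary.mem_iff.2 ⟨hz1, hz2⟩, hzq, hzn⟩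


end Stmt0Aux

section Stmt0Aux2
variable {A : Type*} [CStarAlgebra A]

lemma unitary_conj_norm {u : A} (hu : u ∈ unitary A) (X : A) : ‖u * X * star u‖ = ‖X‖ := by
  rw [CStarRing.norm_mul_mem_unitary _ (Unitary.star_mem hu),
    CStarRing.norm_mem_unitary_mul _ hu]

lemma build_w [Nontrivial A] (α : A ≃⋆ₐ[ℂ] A) {pj u : A}
    (hp1 : star pj = pj) (hp2 : pj * pj = pj) (huU : u ∈ unitary A)
    (hqq' : ‖α pj - star u * pj * u‖ < 1/8) :
    ∃ w : A, star w * w = pj ∧ w * star w = α pj ∧ ‖w‖ ≤ 1 ∧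
      ∀ x : A, ‖w * x - x * w‖ ≤
        100 * ‖x‖ * ‖α pj - star u * pj * u‖ + ‖pj * x - x * pj‖ + ‖u * x - x * u‖ := by
  obtain ⟨hu1, hu2⟩ := Unitary.mem_iff.1 huU
  have hu1' : ∀ t : A, star u * (u * t) = t := fun t => by rw [← mul_assoc, hu1, one_mul]
  have hu2' : ∀ t : A, u * (star u * t) = t := fun t => by rw [← mul_assoc, hu2, one_mul]
  have hp2' : ∀ t : A, pj * (pj * t) = pj * t := fun t => by rw [← mul_assoc, hp2]
  set q : A := α pj with hqdef
  set q' : A := star u * pj * u with hq'def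
  have hq1 : star q = q := by rw [hqdef, ← map_star, hp1]
  have hq2 : q * q = q := by rw [hqdef, ← map_mul, hp2]
  have hq'1 : star q' = q' := by
    rw [hq'def]
    simp only [star_mul, star_star, hp1, mul_assoc]
  have hq'2 : q' * q' = q' := by
    rw [hq'def]
    simp only [mul_assoc, hu2', hp2']
  obtain ⟨z, hzU, hzq, hzn⟩ := exists_unitary_intertwiner hq1 hq2 hq'1 hq'2 hqq'
  obtain ⟨hz1, hz2⟩ := Unitary.mem_iff.1 hzU
  set w : A := z * (star u * pj) with hwdef
  have hw1 : star w * w = pj := by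
    rw [hwdef]
    calc star (z * (star u * pj)) * (z * (star u * pj))
        = (star pj * (u * (star z * (z * (star u * pj))))) := by
          simp only [star_mul, star_star, mul_assoc]
      _ = pj * (u * (star u * pj)) := by rw [← mul_assoc (star z) z, hz1, one_mul, hp1]
      _ = pj := by rw [hu2', hp2]
  have hw2 : w * star w = q := by
    rw [hwdef]
    calc (z * (star u * pj)) * star (z * (star u * pj))
        = z * (star u * (pj * (pj * (u * star z)))) := by
          simp only [star_mul, star_star, hp1, mul_assoc]
      _ = z * (star u * (pj * (u * star z))) := by rw [hp2']
      _ = (z * q') * star z := by rw [hq'def]; simp only [mul_assoc]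
      _ = q * (z * star z) := by rw [hzq, mul_assoc]
      _ = q := by rw [hz2, mul_one]
  refine ⟨w, hw1, hw2, ?_, ?_⟩
  · have h := CStarRing.norm_star_mul_self (x := w)
    rw [hw1] at h
    have hpn : ‖pj‖ ≤ 1 := proj_norm_le_one hp1 hp2
    nlinarith [norm_nonneg w]
  · intro x
    have hyn : ‖star u * pj‖ ≤ 1 := by
      rw [CStarRing.norm_mem_unitary_mul _ (Unitary.star_mem huU)]
      exact proj_norm_le_one hp1 hp2
    have e : w * x - x * w = (z - 1) * ((star u * pj) * x)
        + ((star u * pj) * x - x * (star u * pj)) + x * ((1 - z) * (star u * pj)) := by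
      rw [hwdef]; noncomm_ring
    have e2 : (star u * pj) * x - x * (star u * pj)
        = star u * (pj * x - x * pj) + (star u * x - x * star u) * pj := by
      noncomm_ring
    have hsux : ‖star u * x - x * star u‖ = ‖u * x - x * u‖ := by
      have e3 : star u * x - x * star u = star u * ((x * u - u * x) * star u) := by
        simp only [mul_sub, sub_mul, mul_assoc, hu1']
        rw [hu2, mul_one]
      rw [e3, CStarRing.norm_mem_unitary_mul _ (Unitary.star_mem huU),
        CStarRing.norm_mul_mem_unitary _ (Unitary.star_mem huU), norm_sub_rev]
    have hyx : ‖(star u * pj) * x - x * (star u * pj)‖ ≤ ‖pj * x - x * pj‖ + ‖u * x - x * u‖ := by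
      rw [e2]
      calc ‖star u * (pj * x - x * pj) + (star u * x - x * star u) * pj‖
          ≤ ‖star u * (pj * x - x * pj)‖ + ‖(star u * x - x * star u) * pj‖ := norm_add_le _ _
        _ ≤ ‖pj * x - x * pj‖ + ‖star u * x - x * star u‖ * ‖pj‖ := by
            rw [CStarRing.norm_mem_unitary_mul _ (Unitary.star_mem huU)]
            exact add_le_add le_rfl (norm_mul_le _ _)
        _ ≤ ‖pj * x - x * pj‖ + ‖u * x - x * u‖ := by
            rw [hsux]
            nlinarith [proj_norm_le_one hp1 hp2, norm_nonneg (u * x - x * u),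
              norm_nonneg (star u * x - x * star u), hsux]
    calc ‖w * x - x * w‖ = ‖(z - 1) * ((star u * pj) * x) + ((star u * pj) * x - x * (star u * pj)) + x * ((1 - z) * (star u * pj))‖ := by rw [e]
      _ ≤ ‖(z - 1) * ((star u * pj) * x)‖ + ‖(star u * pj) * x - x * (star u * pj)‖ + ‖x * ((1 - z) * (star u * pj))‖ := norm_add₃_le
      _ ≤ ‖z - 1‖ * ‖x‖ + (‖pj * x - x * pj‖ + ‖u * x - x * u‖) + ‖x‖ * ‖z - 1‖ := by
          have b1 : ‖(z - 1) * ((star u * pj) * x)‖ ≤ ‖z - 1‖ * ‖x‖ := by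
            calc ‖(z - 1) * ((star u * pj) * x)‖ ≤ ‖z - 1‖ * ‖(star u * pj) * x‖ := norm_mul_le _ _
              _ ≤ ‖z - 1‖ * (‖star u * pj‖ * ‖x‖) := by
                  exact mul_le_mul_of_nonneg_left (norm_mul_le _ _) (norm_nonneg _)
              _ ≤ ‖z - 1‖ * (1 * ‖x‖) := mul_le_mul_of_nonneg_left
                  (mul_le_mul_of_nonneg_right hyn (norm_nonneg x)) (norm_nonneg _)
              _ = ‖z - 1‖ * ‖x‖ := by ring
          have b2 : ‖x * ((1 - z) * (star u * pj))‖ ≤ ‖x‖ * ‖z - 1‖ := by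
            calc ‖x * ((1 - z) * (star u * pj))‖ ≤ ‖x‖ * ‖(1 - z) * (star u * pj)‖ := norm_mul_le _ _
              _ ≤ ‖x‖ * (‖1 - z‖ * ‖star u * pj‖) := by
                  exact mul_le_mul_of_nonneg_left (norm_mul_le _ _) (norm_nonneg _)
              _ ≤ ‖x‖ * (‖1 - z‖ * 1) := mul_le_mul_of_nonneg_left
                  (mul_le_mul_of_nonneg_left hyn (norm_nonneg _)) (norm_nonneg _)
              _ = ‖x‖ * ‖z - 1‖ := by rw [norm_sub_rev (1:A) z]; ring
          exact add_le_add (add_le_add b1 hyx) b2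
      _ ≤ 100 * ‖x‖ * ‖q - q'‖ + ‖pj * x - x * pj‖ + ‖u * x - x * u‖ := by
          nlinarith [norm_nonneg x, norm_nonneg (q - q'), hzn, norm_nonneg (z - 1)]

end Stmt0Aux2

/-- Let `A` be a unital separable C*-algebra and `α` an approximately inner
automorphism of `A`. If `(p j)` is a central sequence of projections, then there is a central
sequence `(w j)` of partial isometries with `w j * (w j)* = p j` and `w j (w j)* = α (p j)`. -/
theorem stmt0 {A : Type*} [CStarAlgebra A] [TopologicalSpace.SeparableSpace A]
    (α : A ≃⋆ₐ[ℂ] A) (hα : ApproxInner (⇑α))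
    (p : ℕ → A) (hp : ∀ j, IsProjection (p j)) (hpc : IsCentralSeq p) :
    ∃ w : ℕ → A, IsCentralSeq w ∧
      ∀ j, star (w j) * w j = p j ∧ w j * star (w j) = α (p j) := by
  classical
  rcases subsingleton_or_nontrivial A with hA | hA
  · exact ⟨p, hpc, fun j => ⟨Subsingleton.elim _ _, Subsingleton.elim _ _⟩⟩
  obtain ⟨a, ha⟩ := TopologicalSpace.exists_dense_seq A
  -- a sequence of unitaries approximately implementing α on initial segments
  have hvex : ∀ n : ℕ, ∃ v : A, v ∈ unitary A ∧
      ∀ k ≤ n, ‖α (a k) - star v * a k * v‖ < 1/(n+1) := by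
    intro n
    obtain ⟨v, hvU, hv⟩ := hα ((Finset.range (n+1)).image a) (1/(n+1)) (by positivity)
    exact ⟨v, hvU, fun k hk =>
      hv _ (Finset.mem_image_of_mem a (Finset.mem_range.2 (Nat.lt_succ_of_le hk)))⟩
  choose v hvU hv using hvex
  -- α ∘ p is a central sequence
  have hαpc : ∀ x : A, Tendsto (fun j => ‖α (p j) * x - x * α (p j)‖) atTop (nhds 0) := by
    intro x
    have h0 := hpc (α.symm x)
    have he : ∀ j, ‖α (p j) * x - x * α (p j)‖ = ‖p j * α.symm x - α.symm x * p j‖ := by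
      intro j
      rw [← StarAlgEquiv.norm_map α (p j * α.symm x - α.symm x * p j)]
      congr 1
      rw [map_sub, map_mul, map_mul, StarAlgEquiv.apply_symm_apply]
    simpa only [he] using h0
  -- choose thresholds
  have hKex : ∀ m : ℕ, ∃ K : ℕ, ∀ j ≥ K, ‖v m * α (p j) - α (p j) * v m‖ < 1/(m+1) := by
    intro m
    obtain ⟨K, hK⟩ := (Metric.tendsto_atTop.1 (hαpc (v m))) (1/(m+1)) (by positivity)
    refine ⟨K, fun j hj => ?_⟩
    have h1 := hK j hj
    rw [Real.dist_eq, sub_zero, abs_of_nonneg (norm_nonneg _)] at h1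
    rwa [norm_sub_rev]
  choose K hK using hKex
  set J : ℕ → ℕ := fun m => (Finset.range (m+1)).sup K + m with hJ
  have hJK : ∀ m, K m ≤ J m := fun m =>
    le_trans (Finset.le_sup (Finset.mem_range.2 (Nat.lt_succ_self m))) (Nat.le_add_right _ _)
  set N : ℕ → ℕ := fun j => Nat.findGreatest (fun m => J m ≤ j) j with hN
  have hNspec : ∀ j, N j ≠ 0 → J (N j) ≤ j := by
    intro j h
    have he : Nat.findGreatest (fun m => J m ≤ j) j = N j := by rw [hN]
    exact Nat.findGreatest_of_ne_zero (P := fun m => J m ≤ j) he h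
  have hNtend : Tendsto N atTop atTop := by
    rw [tendsto_atTop]
    intro m
    filter_upwards [eventually_ge_atTop (max (J m) m)] with j hj
    exact Nat.le_findGreatest (le_trans (le_max_right _ _) hj)
      (le_trans (le_max_left _ _) hj)
  set ε : ℕ → ℝ := fun j => 1/(j+16) with hε
  have hε0 : ∀ j, 0 < ε j := fun j => by positivity
  have hε16 : ∀ j : ℕ, ε j ≤ 1/16 := by
    intro j
    rw [hε]
    apply one_div_le_one_div_of_le (by norm_num)
    have : (0:ℝ) ≤ (j:ℝ) := Nat.cast_nonneg j
    linarith
  have hεtend : Tendsto ε atTop (nhds 0) := by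
    apply squeeze_zero (fun j => (hε0 j).le) (g := fun j : ℕ => 1/(j+1))
    · intro j
      rw [hε]
      apply one_div_le_one_div_of_le (by positivity)
      have : (0:ℝ) ≤ (j:ℝ) := Nat.cast_nonneg j
      linarith
    · exact tendsto_one_div_add_atTop_nhds_zero_nat
  set B : ℕ → ℝ := fun j => ε j + 1/(N j + 1) with hB
  have hBtend : Tendsto B atTop (nhds 0) := by
    have h2 : Tendsto (fun j => (1:ℝ)/(N j + 1)) atTop (nhds 0) :=
      tendsto_one_div_add_atTop_nhds_zero_nat.comp hNtend
    simpa only [hB, one_div, add_zero] using hεtend.add h2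
  -- the key pointwise construction
  have key : ∀ j, ∃ w : A, (star w * w = p j ∧ w * star w = α (p j)) ∧ ‖w‖ ≤ 1 ∧
      (15 ≤ N j → ∀ k, k ≤ N j →
        ‖w * a k - a k * w‖ ≤ (100 * ‖a k‖ + 1) * B j + ‖p j * a k - a k * p j‖) := by
    intro j
    have hp1 : star (p j) = p j := (hp j).1.star_eq
    have hp2 : p j * p j = p j := (hp j).2
    obtain ⟨v', hv'U, hv'⟩ := hα (insert (p j) ((Finset.range (N j + 1)).image a))
      (ε j) (hε0 j)
    have hv'p : ‖α (p j) - star v' * p j * v'‖ < ε j := hv' _ (Finset.mem_insert_self _ _)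
    have hv'a : ∀ k, k ≤ N j → ‖α (a k) - star v' * a k * v'‖ < ε j := fun k hk =>
      hv' _ (Finset.mem_insert_of_mem
        (Finset.mem_image_of_mem a (Finset.mem_range.2 (Nat.lt_succ_of_le hk))))
    obtain ⟨hv'1, hv'2⟩ := Unitary.mem_iff.1 hv'U
    by_cases hbig : 15 ≤ N j
    · -- main branch
      have hvm1 : star (v (N j)) * v (N j) = 1 := (Unitary.mem_iff.1 (hvU (N j))).1
      have hvm2 : v (N j) * star (v (N j)) = 1 := (Unitary.mem_iff.1 (hvU (N j))).2
      set u := v' * star (v (N j)) with hu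
      have huU : u ∈ unitary A := mul_mem hv'U (Unitary.star_mem (hvU (N j)))
      have hcomm_vm : ‖v (N j) * α (p j) - α (p j) * v (N j)‖ < 1/(N j + 1) := by
        apply hK (N j) j
        exact le_trans (hJK (N j)) (hNspec j (by omega))
      have hstaru : star u = v (N j) * star v' := by rw [hu, star_mul, star_star]
      have hq'e : star u * p j * u = v (N j) * (star v' * p j * v') * star (v (N j)) := by
        rw [hstaru, hu]
        simp only [mul_assoc]
      have hest : ‖α (p j) - star u * p j * u‖ < ε j + 1/(N j + 1) := by
        have t1 : α (p j) - star u * p j * u =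
            (α (p j) - v (N j) * α (p j) * star (v (N j))) +
            (v (N j) * (α (p j) - star v' * p j * v') * star (v (N j))) := by
          rw [hq'e]
          simp only [mul_sub, sub_mul, mul_assoc]
          abel
        have n1 : ‖α (p j) - v (N j) * α (p j) * star (v (N j))‖ < 1/(N j + 1) := by
          have e1 : α (p j) - v (N j) * α (p j) * star (v (N j)) =
              (α (p j) * v (N j) - v (N j) * α (p j)) * star (v (N j)) := by
            simp only [sub_mul, mul_assoc, hvm2, mul_one]
          rw [e1, CStarRing.norm_mul_mem_unitary _ (Unitary.star_mem (hvU (N j))),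
            norm_sub_rev]
          exact hcomm_vm
        have n2 : ‖v (N j) * (α (p j) - star v' * p j * v') * star (v (N j))‖ < ε j := by
          rw [unitary_conj_norm (hvU (N j))]
          exact hv'p
        calc ‖α (p j) - star u * p j * u‖
            ≤ ‖α (p j) - v (N j) * α (p j) * star (v (N j))‖ +
              ‖v (N j) * (α (p j) - star v' * p j * v') * star (v (N j))‖ := by
              rw [t1]; exact norm_add_le _ _
          _ < 1/(N j + 1) + ε j := by linarith
          _ = ε j + 1/(N j + 1) := by ring
      have hest8 : ‖α (p j) - star u * p j * u‖ < 1/8 := by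
        have h1 : (1:ℝ)/(N j + 1) ≤ 1/16 := by
          apply one_div_le_one_div_of_le (by norm_num)
          have : (15:ℝ) ≤ (N j : ℝ) := by exact_mod_cast hbig
          linarith
        calc ‖α (p j) - star u * p j * u‖ < ε j + 1/(N j + 1) := hest
          _ ≤ 1/16 + 1/16 := add_le_add (hε16 j) h1
          _ = 1/8 := by norm_num
      obtain ⟨w, hw1, hw2, hwn, hwc⟩ := build_w α hp1 hp2 huU hest8
      refine ⟨w, ⟨hw1, hw2⟩, hwn, fun _ k hk => ?_⟩
      have hucomm : ‖u * a k - a k * u‖ ≤ B j := by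
        have e0 : ‖u * a k - a k * u‖ = ‖u * a k * star u - a k‖ := by
          have e1 : u * a k * star u - a k = (u * a k - a k * u) * star u := by
            simp only [sub_mul, mul_assoc, (Unitary.mem_iff.1 huU).2, mul_one]
          rw [e1, CStarRing.norm_mul_mem_unitary _ (Unitary.star_mem huU)]
        have e2 : u * a k * star u = v' * (star (v (N j)) * a k * v (N j)) * star v' := by
          rw [hu, hstaru]
          simp only [mul_assoc]
        have t1 : u * a k * star u - a k =
            v' * (star (v (N j)) * a k * v (N j) - α (a k)) * star v' +
            (v' * α (a k) * star v' - a k) := by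
          rw [e2]
          simp only [mul_sub, sub_mul, mul_assoc]
          abel
        have n1 : ‖v' * (star (v (N j)) * a k * v (N j) - α (a k)) * star v'‖
            < 1/(N j + 1) := by
          rw [unitary_conj_norm hv'U, norm_sub_rev]
          exact hv (N j) k hk
        have hcancel : ∀ t : A, v' * (star v' * t) = t := fun t => by
          rw [← mul_assoc, hv'2, one_mul]
        have n2 : ‖v' * α (a k) * star v' - a k‖ < ε j := by
          have e3 : v' * α (a k) * star v' - a k =
              v' * (α (a k) - star v' * a k * v') * star v' := by
            simp only [mul_sub, sub_mul, mul_assoc, hcancel, hv'2, mul_one]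
          rw [e3, unitary_conj_norm hv'U]
          exact hv'a k hk
        rw [e0, hB]
        calc ‖u * a k * star u - a k‖
            ≤ ‖v' * (star (v (N j)) * a k * v (N j) - α (a k)) * star v'‖ +
              ‖v' * α (a k) * star v' - a k‖ := by rw [t1]; exact norm_add_le _ _
          _ ≤ ε j + 1/(N j + 1) := by linarith
      have hη : ‖α (p j) - star u * p j * u‖ ≤ B j := by
        rw [hB]; exact hest.le
      calc ‖w * a k - a k * w‖
          ≤ 100 * ‖a k‖ * ‖α (p j) - star u * p j * u‖ +
            ‖p j * a k - a k * p j‖ + ‖u * a k - a k * u‖ := hwc (a k)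
        _ ≤ 100 * ‖a k‖ * B j + ‖p j * a k - a k * p j‖ + B j := by
            have hB0 : 0 ≤ B j := by
              rw [hB]
              have := (hε0 j).le
              positivity
            refine add_le_add (add_le_add ?_ le_rfl) hucomm
            exact mul_le_mul_of_nonneg_left hη (by positivity)
        _ = (100 * ‖a k‖ + 1) * B j + ‖p j * a k - a k * p j‖ := by ring
    · -- small branch: no commutator estimate needed
      have hest8 : ‖α (p j) - star v' * p j * v'‖ < 1/8 := by
        calc ‖α (p j) - star v' * p j * v'‖ < ε j := hv'p
          _ ≤ 1/16 := hε16 j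
          _ < 1/8 := by norm_num
      obtain ⟨w, hw1, hw2, hwn, -⟩ := build_w α hp1 hp2 hv'U hest8
      exact ⟨w, ⟨hw1, hw2⟩, hwn, fun h => absurd h hbig⟩
  choose w hw hwn hwc using key
  refine ⟨w, ?_, hw⟩
  -- centrality
  intro x
  rw [Metric.tendsto_atTop]
  intro δ hδ
  obtain ⟨k, hak⟩ := (Metric.denseRange_iff.1 ha) x (δ/8) (by linarith)
  have h1 : ∀ᶠ j in atTop, (100 * ‖a k‖ + 1) * B j < δ/4 := by
    have h1' := hBtend.const_mul (100 * ‖a k‖ + 1)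
    rw [mul_zero] at h1'
    have := (Metric.tendsto_atTop.1 h1') (δ/4) (by linarith)
    obtain ⟨M, hM⟩ := this
    filter_upwards [eventually_ge_atTop M] with j hj
    have := hM j hj
    rw [Real.dist_eq, sub_zero] at this
    exact lt_of_abs_lt this
  have h2 : ∀ᶠ j in atTop, ‖p j * a k - a k * p j‖ < δ/4 := by
    obtain ⟨M, hM⟩ := (Metric.tendsto_atTop.1 (hpc (a k))) (δ/4) (by linarith)
    filter_upwards [eventually_ge_atTop M] with j hj
    have := hM j hj
    rw [Real.dist_eq, sub_zero] at this
    exact lt_of_abs_lt this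
  have h3 : ∀ᶠ j in atTop, 15 ≤ N j ∧ k ≤ N j := by
    have := hNtend.eventually_ge_atTop (max 15 k)
    filter_upwards [this] with j hj
    exact ⟨le_trans (le_max_left _ _) hj, le_trans (le_max_right _ _) hj⟩
  rw [eventually_atTop] at h1 h2 h3
  obtain ⟨M1, hM1⟩ := h1
  obtain ⟨M2, hM2⟩ := h2
  obtain ⟨M3, hM3⟩ := h3
  refine ⟨max M1 (max M2 M3), fun j hj => ?_⟩
  have hj1 : M1 ≤ j := le_trans (le_max_left _ _) hj
  have hj2 : M2 ≤ j := le_trans (le_max_left _ _) (le_trans (le_max_right _ _) hj)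
  have hj3 : M3 ≤ j := le_trans (le_max_right _ _) (le_trans (le_max_right _ _) hj)
  obtain ⟨hb15, hbk⟩ := hM3 j hj3
  have hcomm := hwc j hb15 k hbk
  have hxa : ‖x - a k‖ < δ/8 := by
    have := hak
    rw [dist_comm, dist_eq_norm] at this
    rwa [norm_sub_rev]
  have main : ‖w j * x - x * w j‖ < δ := by
    have e : w j * x - x * w j =
        w j * (x - a k) + (w j * a k - a k * w j) + (a k - x) * w j := by noncomm_ring
    have b1 : ‖w j * (x - a k)‖ ≤ δ/8 := by
      calc ‖w j * (x - a k)‖ ≤ ‖w j‖ * ‖x - a k‖ := norm_mul_le _ _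
        _ ≤ 1 * (δ/8) := mul_le_mul (hwn j) hxa.le (norm_nonneg _) zero_le_one
        _ = δ/8 := by ring
    have b3 : ‖(a k - x) * w j‖ ≤ δ/8 := by
      calc ‖(a k - x) * w j‖ ≤ ‖a k - x‖ * ‖w j‖ := norm_mul_le _ _
        _ ≤ (δ/8) * 1 := by
            rw [norm_sub_rev]
            exact mul_le_mul hxa.le (hwn j) (norm_nonneg _) (by linarith)
        _ = δ/8 := by ring
    have b2 : ‖w j * a k - a k * w j‖ < δ/2 := by
      calc ‖w j * a k - a k * w j‖
          ≤ (100 * ‖a k‖ + 1) * B j + ‖p j * a k - a k * p j‖ := hcomm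
        _ < δ/4 + δ/4 := add_lt_add (hM1 j hj1) (hM2 j hj2)
        _ = δ/2 := by ring
    calc ‖w j * x - x * w j‖
        ≤ ‖w j * (x - a k)‖ + ‖w j * a k - a k * w j‖ + ‖(a k - x) * w j‖ := by
          rw [e]; exact norm_add₃_le
      _ < δ/8 + δ/2 + δ/8 := by linarith
      _ ≤ δ := by linarith
  rw [Real.dist_eq, sub_zero, abs_of_nonneg (norm_nonneg _)]
  exact main
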